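/- For α ∈ ℂ let 𝒵₀₂^α be ℂ⁵ with basis e₁,…,e₅ and bilinear multiplication given by e₁e₁ = e₂, e₁e₂ = e₅, e₂e₁ = 2e₅, e₃e₄ = e₅, e₄e₃ = α e₅, all other basis products zero. If α, β ∈ ℂ and there exists a linear bijection φ : ℂ⁵ → ℂ⁵ with φ(x·_α y) = φ(x)·_β φ(y) for all x,y ∈ ℂ⁵, then β = α or αβ = 1. -/
import Mathlib


/-- The standard basis of `ℂ⁵`. -/
def ee (i : Fin 5) : Fin 5 → ℂ := Pi.single i 1

/-- Structure constants (0-indexed) of the algebra `𝒵₀₂^α`: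
`e₁e₁ = e₂`, `e₁e₂ = e₅`, `e₂e₁ = 2e₅`, `e₃e₄ = e₅`, `e₄e₃ = α e₅`. -/
def cZ02 (α : ℂ) (i j : Fin 5) : Fin 5 → ℂ :=
  if i = 0 ∧ j = 0 then ee 1
  else if i = 0 ∧ j = 1 then ee 4
  else if i = 1 ∧ j = 0 then (2 : ℂ) • ee 4
  else if i = 2 ∧ j = 3 then ee 4
  else if i = 3 ∧ j = 2 then α • ee 4
  else 0

lemma eev (i j : Fin 5) : ee i j = if i = j then 1 else 0 := by
  simp [ee, Pi.single_apply, eq_comm]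

/-- The scalar algebra at the heart of the classification. -/
lemma Z02_key_alg (α β lam r2 r3 s2 s3 : ℂ) (hlam : lam ≠ 0)
    (E1 : lam = r2 * s3 + β * (s2 * r3))
    (E2 : α * lam = r3 * s2 + β * (s3 * r2))
    (E3 : r2 * s2 + β * (s2 * r2) = 0)
    (E4 : r3 * s3 + β * (s3 * r3) = 0) :
    β = α ∨ α * β = 1 := by
  by_cases hb : β = -1
  · subst hb
    have h : α * lam = (-1) * lam := by linear_combination E1 + E2
    exact Or.inl (mul_right_cancel₀ hlam h).symm
  · have hb1 : (1 : ℂ) + β ≠ 0 := fun h => hb (by linear_combination h)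
    have h2 : r2 * s2 = 0 := by
      have : (1 + β) * (r2 * s2) = 0 := by linear_combination E3
      exact (mul_eq_zero.mp this).resolve_left hb1
    have h3 : r3 * s3 = 0 := by
      have : (1 + β) * (r3 * s3) = 0 := by linear_combination E4
      exact (mul_eq_zero.mp this).resolve_left hb1
    by_cases hr2 : r2 = 0
    · right
      have hv : lam = β * (s2 * r3) := by linear_combination E1 + s3 * hr2
      have hr3 : r3 ≠ 0 := fun h => hlam (by rw [hv, h, mul_zero, mul_zero])
      have hs3 : s3 = 0 := (mul_eq_zero.mp h3).resolve_left hr3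
      have h : (α * β) * lam = 1 * lam := by
        linear_combination β * E2 - E1 + β * β * r2 * hs3 - s3 * hr2
      exact mul_right_cancel₀ hlam h
    · left
      have hs2 : s2 = 0 := (mul_eq_zero.mp h2).resolve_left hr2
      have hv : lam = r2 * s3 := by linear_combination E1 + β * r3 * hs2
      have hs3 : s3 ≠ 0 := fun h => hlam (by rw [hv, h, mul_zero])
      have hr3 : r3 = 0 := (mul_eq_zero.mp h3).resolve_right hs3
      have h : α * lam = β * lam := by linear_combination E2 - β * hv + s2 * hr3
      exact (mul_right_cancel₀ hlam h).symm

/-- if `𝒵₀₂^α ≅ 𝒵₀₂^β` then `β = α` or `αβ = 1`. -/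
theorem Z02_isomorphism_classes (α β : ℂ)
    (μα μβ : (Fin 5 → ℂ) →ₗ[ℂ] (Fin 5 → ℂ) →ₗ[ℂ] (Fin 5 → ℂ))
    (hμα : ∀ i j, μα (ee i) (ee j) = cZ02 α i j)
    (hμβ : ∀ i j, μβ (ee i) (ee j) = cZ02 β i j)
    (hiso : ∃ φ : (Fin 5 → ℂ) ≃ₗ[ℂ] (Fin 5 → ℂ),
      ∀ x y : Fin 5 → ℂ, φ (μα x y) = μβ (φ x) (φ y)) :
    β = α ∨ α * β = 1 := by
  obtain ⟨φ, hφ⟩ := hiso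
  -- expansion of `μβ` on arbitrary vectors
  have hx : ∀ v : Fin 5 → ℂ, v = ∑ i : Fin 5, v i • ee i := by
    intro v; funext j
    simp [ee, Finset.sum_apply, Pi.single_apply]
  have hexp : ∀ x y : Fin 5 → ℂ,
      μβ x y = ∑ k : Fin 5, ∑ l : Fin 5, (x k * y l) • cZ02 β k l := by
    intro x y
    calc μβ x y = μβ (∑ k : Fin 5, x k • ee k) (∑ l : Fin 5, y l • ee l) := by
          rw [← hx, ← hx]
      _ = _ := by
          simp only [map_sum, map_smul, LinearMap.sum_apply, LinearMap.smul_apply, hμβ,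
            smul_smul, Finset.smul_sum]
          rw [Finset.sum_comm]
          simp only [mul_comm]
  have key : ∀ i j : Fin 5, φ (cZ02 α i j)
      = ∑ k : Fin 5, ∑ l : Fin 5, (φ (ee i) k * φ (ee j) l) • cZ02 β k l := by
    intro i j
    rw [← hμα i j, hφ, hexp]
  -- extract the needed coordinate equations
  have h22a := congrFun (key 2 2) 1
  have h33a := congrFun (key 3 3) 1
  have h22b := congrFun (key 2 2) 4
  have h33b := congrFun (key 3 3) 4
  have h32 := congrFun (key 3 2) 4
  have h23_0 := congrFun (key 2 3) 0
  have h23_1 := congrFun (key 2 3) 1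
  have h23_2 := congrFun (key 2 3) 2
  have h23_3 := congrFun (key 2 3) 3
  have h23_4 := congrFun (key 2 3) 4
  simp [cZ02, eev, Fin.sum_univ_five, Finset.sum_apply, Pi.single_apply] at h22a h33a h22b h33b h32 h23_0 h23_1 h23_2 h23_3 h23_4
  -- φ (ee 4) = λ • ee 4 with λ ≠ 0
  have hlam : φ (ee 4) 4 ≠ 0 := by
    intro h
    have h0 : φ (ee 4) = 0 := by
      funext m
      fin_cases m
      · exact h23_0
      · show φ (ee 4) 1 = (0 : Fin 5 → ℂ) 1
        rw [h23_1, h22a, zero_mul]; rfl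
      · exact h23_2
      · exact h23_3
      · exact h
    have h4 : ee 4 = 0 := φ.injective (by rw [h0]; simp)
    simpa [eev] using congrFun h4 4
  -- assemble the scalar equations
  refine Z02_key_alg α β (φ (ee 4) 4) (φ (ee 2) 2) (φ (ee 3) 2) (φ (ee 2) 3) (φ (ee 3) 3)
    hlam ?_ ?_ ?_ ?_
  · linear_combination h23_4 + φ (ee 3) 1 * h22a + 2 * φ (ee 2) 1 * h33a
  · linear_combination h32 + φ (ee 2) 1 * h33a + 2 * φ (ee 3) 1 * h22a
  · linear_combination -h22b - φ (ee 2) 1 * h22a - 2 * φ (ee 2) 1 * h22a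
  · linear_combination -h33b - φ (ee 3) 1 * h33a - 2 * φ (ee 3) 1 * h33a
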